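/- arXiv:1005.1598 — 7 statements merged into one kernel-verified Lean document; each statement's English description precedes it below -/
import Mathlib

section
/- Let G be a group of permutations of a finite set Ω. Suppose there exist subsets B, C ⊆ Ω and a prime p such that p does not divide |B| · |C| but p divides |B ∩ g(C)| for every g ∈ G. Then no subset S ⊆ G is sharply transitive on Ω. -/
/-!
Double counting: if `S` is sharply transitive, then for all `c ∈ C` and `b ∈ B` exactly one
`g ∈ S` maps `c` to `b`, so `∑ g ∈ S, #(B ∩ g C) = #B * #C`. When `S ⊆ G`, `p` divides
every term of the sum, hence it divides `#B * #C`.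
-/

open Finset

namespace Equiv.Perm

variable {Ω : Type*}

def IsSharplyTransitive (S : Finset (Perm Ω)) : Prop :=
  ∀ a b : Ω, ∃! g : Perm Ω, g ∈ S ∧ g a = b

variable [DecidableEq Ω]

theorem card_inter_image_eq_card_filter (g : Perm Ω) (B C : Finset Ω) :
    #(B ∩ C.image g) = #{c ∈ C | g c ∈ B} := by
  rw [inter_comm, ← filter_mem_eq_inter, filter_image, card_image_of_injective _ g.injective]

theorem IsSharplyTransitive.card_filter_apply_eq {S : Finset (Perm Ω)}
    (hS : IsSharplyTransitive S) (a b : Ω) : #{g ∈ S | g a = b} = 1 := by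
  obtain ⟨g, hg, huniq⟩ := hS a b
  exact card_eq_one.mpr ⟨g, eq_singleton_iff_unique_mem.mpr
    ⟨mem_filter.mpr hg, fun g' hg' => huniq g' (mem_filter.mp hg')⟩⟩

theorem IsSharplyTransitive.card_filter_apply_mem {S : Finset (Perm Ω)}
    (hS : IsSharplyTransitive S) (a : Ω) (B : Finset Ω) : #{g ∈ S | g a ∈ B} = #B := by
  rw [card_eq_sum_card_fiberwise (f := fun g : Perm Ω => g a) (s := {g ∈ S | g a ∈ B}) (t := B)
    fun g hg => (mem_filter.mp hg).2]
  calc ∑ b ∈ B, #{g ∈ {g ∈ S | g a ∈ B} | g a = b}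
      = ∑ b ∈ B, #{g ∈ S | g a = b} := sum_congr rfl fun b hb => by
        rw [filter_filter]
        congr 1 with g
        grind
    _ = #B := by simp only [hS.card_filter_apply_eq, sum_const, smul_eq_mul, mul_one]

theorem IsSharplyTransitive.sum_card_inter_image {S : Finset (Perm Ω)}
    (hS : IsSharplyTransitive S) (B C : Finset Ω) :
    ∑ g ∈ S, #(B ∩ C.image g) = #B * #C := by
  calc ∑ g ∈ S, #(B ∩ C.image g)
      = ∑ g ∈ S, #(C.bipartiteAbove (fun g c => g c ∈ B) g) :=
        sum_congr rfl fun g _ => card_inter_image_eq_card_filter g B C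
    _ = ∑ c ∈ C, #(S.bipartiteBelow (fun g c => g c ∈ B) c) :=
        sum_card_bipartiteAbove_eq_sum_card_bipartiteBelow _
    _ = #B * #C := by
        simp only [bipartiteBelow, hS.card_filter_apply_mem, sum_const, smul_eq_mul, mul_comm]

end Equiv.Perm

theorem stmt_1_general {Ω : Type*} [DecidableEq Ω]
    (G : Subgroup (Equiv.Perm Ω)) (B C : Finset Ω) (p : ℕ)
    (hBC : ¬ p ∣ B.card * C.card)
    (hdvd : ∀ g ∈ G, p ∣ (B ∩ C.image g).card) :
    ¬ ∃ S : Finset (Equiv.Perm Ω), (∀ g ∈ S, g ∈ G) ∧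
      ∀ a b : Ω, ∃! g : Equiv.Perm Ω, g ∈ S ∧ g a = b := by
  rintro ⟨S, hSG, hS⟩
  apply hBC
  rw [← Equiv.Perm.IsSharplyTransitive.sum_card_inter_image hS]
  exact dvd_sum fun g hg => hdvd g (hSG g hg)

theorem stmt_1 {Ω : Type*} [Fintype Ω] [DecidableEq Ω]
    (G : Subgroup (Equiv.Perm Ω)) (B C : Finset Ω) (p : ℕ) (hp : p.Prime)
    (hBC : ¬ p ∣ B.card * C.card)
    (hdvd : ∀ g ∈ G, p ∣ (B ∩ C.image g).card) :
    ¬ ∃ S : Finset (Equiv.Perm Ω), (∀ g ∈ S, g ∈ G) ∧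
      ∀ a b : Ω, ∃! g : Equiv.Perm Ω, g ∈ S ∧ g a = b :=
  stmt_1_general G B C p hBC hdvd
end

section
/- If n ≡ 2 or 3 (mod 4), then the alternating group A_n contains no sharply 2-transitive set of permutations, i.e., there is no set S ⊆ A_n such that for all pairs of distinct points (x₁, x₂) and (y₁, y₂) in {1,…,n} there is exactly one g ∈ S with g(x₁) = y₁ and g(x₂) = y₂. -/
/-!
Write `sign g` as a product over the pairs `i < j` with a factor `-1` for each inversion. If `S` is
sharply 2-transitive, then for fixed `i ≠ j` the map `g ↦ (g i, g j)` is a bijection from `S` onto the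
pairs of distinct points, so each pair `i < j` is inverted by exactly `N = n.choose 2` members of `S`.
Hence `∏ g ∈ S, sign g = (-1) ^ (N * N)`, which is `-1` when `N` is odd, that is, when
`n ≡ 2, 3 (mod 4)`; so `S` cannot consist of even permutations.
-/

open Equiv Equiv.Perm Finset

def IsSharplyTwoTransitive {α : Type*} (S : Finset (Perm α)) : Prop :=
  ∀ x₁ x₂ y₁ y₂ : α, x₁ ≠ x₂ → y₁ ≠ y₂ → ∃! g : Perm α, g ∈ S ∧ g x₁ = y₁ ∧ g x₂ = y₂

theorem Nat.odd_choose_two_of_mod_four {n : ℕ} (hn : n % 4 = 2 ∨ n % 4 = 3) :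
    Odd (n.choose 2) := by
  have hprod : n * (n - 1) % 4 = 2 := by
    rw [Nat.mul_mod]
    rcases hn with h | h <;> rw [h, show (n - 1) % 4 = n % 4 - 1 by omega, h]
  rw [Nat.odd_iff, Nat.choose_two_right, ← Nat.mod_mul_right_div_self, hprod]

theorem Equiv.Perm.sign_eq_prod_filter_lt {n : ℕ} (σ : Perm (Fin n)) :
    sign σ = ∏ p : Fin n × Fin n with p.1 < p.2, if σ p.2 < σ p.1 then -1 else 1 := by
  rw [sign_eq_prod_prod_Iio, prod_filter, Fintype.prod_prod_type_right]
  refine Fintype.prod_congr _ _ fun j => ?_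
  rw [← prod_filter]
  refine prod_congr (by ext; simp) fun i hi => ?_
  rcases lt_or_gt_of_ne (σ.injective.ne (mem_filter.1 hi).2.ne) with h | h <;> simp [h, h.not_gt]

namespace IsSharplyTwoTransitive

theorem card_filter_apply_lt {α : Type*} [LinearOrder α] [Fintype α] {S : Finset (Perm α)}
    (hS : IsSharplyTwoTransitive S) {x₁ x₂ : α} (hx : x₁ ≠ x₂) :
    #{g ∈ S | g x₁ < g x₂} = #{p : α × α | p.1 < p.2} := by
  refine card_bij (fun g _ => (g x₁, g x₂)) (fun g hg => by simpa using (mem_filter.1 hg).2)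
    (fun g hg g' hg' hgg' => ?_) fun p hp => ?_
  · obtain ⟨hgS, hlt⟩ := mem_filter.1 hg
    obtain ⟨h₁, h₂⟩ := Prod.mk.inj hgg'
    exact (hS x₁ x₂ _ _ hx hlt.ne).unique ⟨hgS, rfl, rfl⟩ ⟨(mem_filter.1 hg').1, h₁.symm, h₂.symm⟩
  · have hlt : p.1 < p.2 := (mem_filter.1 hp).2
    obtain ⟨g, ⟨hgS, hg₁, hg₂⟩, -⟩ := hS x₁ x₂ p.1 p.2 hx hlt.ne
    exact ⟨g, mem_filter.2 ⟨hgS, by rwa [hg₁, hg₂]⟩, by rw [hg₁, hg₂]⟩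

theorem prod_sign {n : ℕ} {S : Finset (Perm (Fin n))} (hS : IsSharplyTwoTransitive S) :
    ∏ g ∈ S, sign g = (-1) ^ (n.choose 2 * n.choose 2) := by
  have hcount : ∀ p : Fin n × Fin n, p.1 < p.2 → #{g ∈ S | g p.2 < g p.1} = n.choose 2 :=
    fun p hp => by
      rw [hS.card_filter_apply_lt hp.ne', Fintype.card_product_filter_lt, Fintype.card_fin]
  calc ∏ g ∈ S, sign g
      = ∏ p : Fin n × Fin n with p.1 < p.2, ∏ g ∈ S, if g p.2 < g p.1 then -1 else 1 := by
        simp_rw [sign_eq_prod_filter_lt]; exact prod_comm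
    _ = ∏ p : Fin n × Fin n with p.1 < p.2, (-1) ^ n.choose 2 := by
        refine prod_congr rfl fun p hp => ?_
        rw [prod_ite, prod_const, prod_const_one, mul_one, hcount p (mem_filter.1 hp).2]
    _ = (-1) ^ (n.choose 2 * n.choose 2) := by
        rw [prod_const, Fintype.card_product_filter_lt, Fintype.card_fin, pow_mul]

end IsSharplyTwoTransitive

theorem stmt_4 {n : ℕ} (hn : n % 4 = 2 ∨ n % 4 = 3) :
    ¬ ∃ S : Finset (Equiv.Perm (Fin n)),
      (∀ g ∈ S, Equiv.Perm.sign g = 1) ∧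
      ∀ x₁ x₂ y₁ y₂ : Fin n, x₁ ≠ x₂ → y₁ ≠ y₂ →
        ∃! g : Equiv.Perm (Fin n), g ∈ S ∧ g x₁ = y₁ ∧ g x₂ = y₂ := by
  rintro ⟨S, hsign, hS⟩
  have hodd := Nat.odd_choose_two_of_mod_four hn
  have h := IsSharplyTwoTransitive.prod_sign hS
  rw [prod_eq_one hsign, (hodd.mul hodd).neg_one_pow] at h
  exact absurd h (by decide)
end

section
/- Let v > k > λ be positive integers with (v−1)λ = k² − k. If (k−λ) divides k and (k−λ) divides v−k, then k − λ = 1 and hence k = v − 1. -/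
/-! From `k (v - k) = (v - 1)(k - λ)`, if `k - λ` divides both `k` and `v - k` then `(k - λ)²`
divides `(v - 1)(k - λ)`, so `k - λ` divides `v - 1`; it also divides `k + (v - k) = v`, hence
`k - λ = 1`. Then `(v - 1) λ = k (k - 1) = k λ` and cancelling `λ` gives `k = v - 1`. -/

theorem dvd_of_dvd_of_dvd_of_mul_eq_mul {α : Type*} [CommMonoidWithZero α] [IsCancelMulZero α]
    {d k m n : α} (hd : d ≠ 0) (hk : d ∣ k) (hm : d ∣ m) (h : k * m = n * d) : d ∣ n :=
  (mul_dvd_mul_iff_right hd).mp (h ▸ mul_dvd_mul hk hm)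

theorem mul_sub_eq_sub_one_mul_sub_of_sub_one_mul_eq {v k lam : ℕ} (hlk : lam ≤ k)
    (hkv : k ≤ v) (hrel : (v - 1) * lam = k ^ 2 - k) : k * (v - k) = (v - 1) * (k - lam) := by
  rcases Nat.eq_zero_or_pos k with rfl | hk
  · simp
  have hkk : k ≤ k ^ 2 := Nat.le_self_pow two_ne_zero k
  zify [hlk, hkv, hkk, show 1 ≤ v by omega] at hrel ⊢
  linear_combination hrel

theorem eq_sub_one_of_sub_eq_one {v k lam : ℕ} (hlam : 0 < lam) (hk : k - lam = 1)
    (hrel : (v - 1) * lam = k ^ 2 - k) : k = v - 1 := by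
  obtain rfl : k = lam + 1 := by omega
  refine (Nat.eq_of_mul_eq_mul_right hlam ?_).symm
  rw [hrel, Nat.sub_eq_of_eq_add]
  ring

theorem stmt_8 {v k lam : ℕ} (hlam : 0 < lam) (h1 : lam < k) (h2 : k < v)
    (hrel : (v - 1) * lam = k ^ 2 - k)
    (hd1 : (k - lam) ∣ k) (hd2 : (k - lam) ∣ (v - k)) :
    k - lam = 1 ∧ k = v - 1 := by
  have hdvd_pred : k - lam ∣ v - 1 :=
    dvd_of_dvd_of_dvd_of_mul_eq_mul (by omega) hd1 hd2
      (mul_sub_eq_sub_one_mul_sub_of_sub_one_mul_eq h1.le h2.le hrel)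
  have hdvd_succ : k - lam ∣ v - 1 + 1 := by
    rw [show v - 1 + 1 = k + (v - k) by omega]
    exact dvd_add hd1 hd2
  have hone : k - lam = 1 := Nat.dvd_one.mp ((Nat.dvd_add_right hdvd_pred).mp hdvd_succ)
  exact ⟨hone, eq_sub_one_of_sub_eq_one hlam hone hrel⟩
end

section
/- Let G be a group acting on a finite set Ω' of points preserving a symmetric 2-(v,k,λ) design with v > k > λ > 0 and k < v − 1. Fix a point ω; then the stabilizer G_ω contains no subset S that is sharply transitive on Ω' \ {ω}. -/
structure SymmetricDesign (P : Type*) [Fintype P] [DecidableEq P]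
    (v k lam : ℕ) where
  blocks : Finset (Finset P)
  card_points : Fintype.card P = v
  card_blocks : blocks.card = v
  block_size : ∀ B ∈ blocks, B.card = k
  point_on : ∀ p : P, (blocks.filter (fun B => p ∈ B)).card = k
  pair_on : ∀ p q : P, p ≠ q →
    (blocks.filter (fun B => p ∈ B ∧ q ∈ B)).card = lam
  block_inter : ∀ B ∈ blocks, ∀ B' ∈ blocks, B ≠ B' → (B ∩ B').card = lam

open Finset

lemma design_identity {P : Type*} [Fintype P] [DecidableEq P] {v k lam : ℕ}
    (D : SymmetricDesign P v k lam) (p : P) :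
    lam * (v - 1) = k * (k - 1) := by
  classical
  have hdouble :
      ∑ q ∈ univ.erase p, (D.blocks.filter (fun B => p ∈ B ∧ q ∈ B)).card
        = ∑ B ∈ D.blocks, ((univ.erase p).filter (fun q => p ∈ B ∧ q ∈ B)).card := by
    simp only [card_filter]
    exact Finset.sum_comm
  have hL : ∑ q ∈ univ.erase p, (D.blocks.filter (fun B => p ∈ B ∧ q ∈ B)).card
      = (v - 1) * lam := by
    rw [Finset.sum_congr rfl (fun q hq => D.pair_on p q (Ne.symm (Finset.ne_of_mem_erase hq)))]
    rw [Finset.sum_const, Finset.card_erase_of_mem (mem_univ p), Finset.card_univ,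
      D.card_points, smul_eq_mul]
  have hR : ∑ B ∈ D.blocks, ((univ.erase p).filter (fun q => p ∈ B ∧ q ∈ B)).card
      = k * (k - 1) := by
    have step : ∀ B ∈ D.blocks, ((univ.erase p).filter (fun q => p ∈ B ∧ q ∈ B)).card
        = if p ∈ B then k - 1 else 0 := by
      intro B hB
      by_cases hp : p ∈ B
      · have : (univ.erase p).filter (fun q => p ∈ B ∧ q ∈ B) = B.erase p := by
          ext q
          simp [hp, Finset.mem_erase, and_comm]
        rw [this, if_pos hp, Finset.card_erase_of_mem hp, D.block_size B hB]
      · simp [hp]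
    rw [Finset.sum_congr rfl step, ← Finset.sum_filter, Finset.sum_const,
      D.point_on p, smul_eq_mul]
  rw [mul_comm]
  omega

lemma inner_count {P : Type*} [Fintype P] [DecidableEq P]
    (ω : P) (S : Finset (Equiv.Perm P))
    (hfix : ∀ g ∈ S, g ω = ω)
    (hsharp : ∀ a b : P, a ≠ ω → b ≠ ω →
      ∃! g : Equiv.Perm P, g ∈ S ∧ g a = b)
    (x : P) (hx : x ≠ ω) (C : Finset P) :
    (S.filter (fun g => (g : Equiv.Perm P) x ∈ C)).card = (C.erase ω).card := by
  apply Finset.card_bij (fun g _ => g x)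
  · intro g hg
    rw [Finset.mem_filter] at hg
    refine Finset.mem_erase.2 ⟨fun h => hx (g.injective (h.trans (hfix g hg.1).symm)), hg.2⟩
  · intro g1 h1 g2 h2 heq
    rw [Finset.mem_filter] at h1 h2
    have hne : g1 x ≠ ω := fun h => hx (g1.injective (h.trans (hfix g1 h1.1).symm))
    obtain ⟨g, _, huniq⟩ := hsharp x (g1 x) hx hne
    rw [huniq g1 ⟨h1.1, rfl⟩, huniq g2 ⟨h2.1, heq.symm⟩]
  · intro b hb
    rw [Finset.mem_erase] at hb
    obtain ⟨g, ⟨hgS, hgx⟩, -⟩ := hsharp x b hx hb.1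
    exact ⟨g, Finset.mem_filter.2 ⟨hgS, by rw [hgx]; exact hb.2⟩, hgx⟩

lemma key_count {P : Type*} [Fintype P] [DecidableEq P] {v k lam : ℕ}
    (D : SymmetricDesign P v k lam)
    (S : Finset (Equiv.Perm P))
    (hSG : ∀ g ∈ S, ∀ B ∈ D.blocks, B.image (g : Equiv.Perm P) ∈ D.blocks)
    (B : Finset P) (hB : B ∈ D.blocks) :
    (S.filter (fun g => B.image (g : Equiv.Perm P) = B)).card * k
      + (S.filter (fun g => ¬ B.image (g : Equiv.Perm P) = B)).card * lam
      = ∑ x ∈ B, (S.filter (fun g => (g : Equiv.Perm P) x ∈ B)).card := by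
  classical
  have swap : ∑ g ∈ S, (B.filter (fun x => (g : Equiv.Perm P) x ∈ B)).card
      = ∑ x ∈ B, (S.filter (fun g => (g : Equiv.Perm P) x ∈ B)).card := by
    simp only [Finset.card_filter]
    exact Finset.sum_comm
  rw [← swap]
  have step : ∀ g ∈ S, (B.filter (fun x => (g : Equiv.Perm P) x ∈ B)).card
      = if B.image (g : Equiv.Perm P) = B then k else lam := by
    intro g hg
    have himg : (B.filter (fun x => (g : Equiv.Perm P) x ∈ B)).image g
        = B.image (g : Equiv.Perm P) ∩ B := by
      ext y
      simp only [Finset.mem_image, Finset.mem_filter, Finset.mem_inter]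
      constructor
      · rintro ⟨x, ⟨hxB, hgx⟩, rfl⟩
        exact ⟨⟨x, hxB, rfl⟩, hgx⟩
      · rintro ⟨⟨x, hxB, rfl⟩, hy⟩
        exact ⟨x, ⟨hxB, hy⟩, rfl⟩
    have hcard : (B.filter (fun x => (g : Equiv.Perm P) x ∈ B)).card
        = (B.image (g : Equiv.Perm P) ∩ B).card := by
      rw [← himg, Finset.card_image_of_injective _ g.injective]
    by_cases h : B.image (g : Equiv.Perm P) = B
    · rw [if_pos h, hcard, h, Finset.inter_self, D.block_size B hB]
    · rw [if_neg h, hcard, D.block_inter _ (hSG g hg B hB) B hB h]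
  rw [Finset.sum_congr rfl step, Finset.sum_ite, Finset.sum_const, Finset.sum_const,
    smul_eq_mul, smul_eq_mul]

theorem stmt_9 {P : Type*} [Fintype P] [DecidableEq P] {v k lam : ℕ}
    (D : SymmetricDesign P v k lam) (hlam : 0 < lam) (h1 : lam < k)
    (h2 : k < v) (h3 : k < v - 1)
    (G : Subgroup (Equiv.Perm P))
    (hG : ∀ g ∈ G, ∀ B ∈ D.blocks, B.image g ∈ D.blocks)
    (ω : P) :
    ¬ ∃ S : Finset (Equiv.Perm P),
      (∀ g ∈ S, g ∈ G ∧ g ω = ω) ∧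
      ∀ a b : P, a ≠ ω → b ≠ ω →
        ∃! g : Equiv.Perm P, g ∈ S ∧ g a = b := by
  classical
  rintro ⟨S, hS, hsharp⟩
  have hfix : ∀ g ∈ S, g ω = ω := fun g hg => (hS g hg).2
  have hSG : ∀ g ∈ S, ∀ B ∈ D.blocks, B.image (g : Equiv.Perm P) ∈ D.blocks :=
    fun g hg => hG g (hS g hg).1
  have hident := design_identity D ω
  have hv : Fintype.card P = v := D.card_points
  -- |S| = v - 1
  have hnt : Nontrivial P := by
    rw [← Fintype.one_lt_card_iff_nontrivial]; omega
  obtain ⟨a, ha⟩ := exists_ne ω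
  have hcardS : S.card = v - 1 := by
    have h := inner_count ω S hfix hsharp a ha Finset.univ
    rw [Finset.filter_true_of_mem (fun g _ => Finset.mem_univ _)] at h
    rw [h, Finset.card_erase_of_mem (Finset.mem_univ ω), Finset.card_univ, hv]
  -- a block through ω
  obtain ⟨B1, hB1m, hB1ω⟩ : ∃ B ∈ D.blocks, ω ∈ B := by
    have hpos : (D.blocks.filter (fun B => ω ∈ B)).Nonempty := by
      rw [← Finset.card_pos, D.point_on ω]; omega
    obtain ⟨B, hB⟩ := hpos
    exact ⟨B, (Finset.mem_filter.1 hB).1, (Finset.mem_filter.1 hB).2⟩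
  -- a block avoiding ω
  obtain ⟨B0, hB0m, hB0ω⟩ : ∃ B ∈ D.blocks, ω ∉ B := by
    by_contra h
    push_neg at h
    have heq : D.blocks.filter (fun B => ω ∈ B) = D.blocks :=
      Finset.filter_true_of_mem h
    have := D.point_on ω
    rw [heq, D.card_blocks] at this
    omega
  -- Equation 1 : from the block avoiding ω
  set n1 := (S.filter (fun g => B0.image (g : Equiv.Perm P) = B0)).card with hn1
  set m1 := (S.filter (fun g => ¬ B0.image (g : Equiv.Perm P) = B0)).card with hm1
  have hsum1 : n1 + m1 = S.card := Finset.card_filter_add_card_filter_not _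
  have e1 : n1 * k + m1 * lam = k * k := by
    have h := key_count D S hSG B0 hB0m
    have hrhs : ∑ x ∈ B0, (S.filter (fun g => (g : Equiv.Perm P) x ∈ B0)).card
        = k * k := by
      have : ∀ x ∈ B0, (S.filter (fun g => (g : Equiv.Perm P) x ∈ B0)).card = k := by
        intro x hx
        have hxω : x ≠ ω := fun h => hB0ω (h ▸ hx)
        rw [inner_count ω S hfix hsharp x hxω B0,
          Finset.erase_eq_of_notMem hB0ω, D.block_size B0 hB0m]
      rw [Finset.sum_congr rfl this, Finset.sum_const, smul_eq_mul,
        D.block_size B0 hB0m]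
    rw [hrhs] at h
    exact h
  -- Equation 2 : from the block through ω
  set n2 := (S.filter (fun g => B1.image (g : Equiv.Perm P) = B1)).card with hn2
  set m2 := (S.filter (fun g => ¬ B1.image (g : Equiv.Perm P) = B1)).card with hm2
  have hsum2 : n2 + m2 = S.card := Finset.card_filter_add_card_filter_not _
  have e2 : n2 * k + m2 * lam = (k - 1) * (k - 1) + S.card := by
    have h := key_count D S hSG B1 hB1m
    have hrhs : ∑ x ∈ B1, (S.filter (fun g => (g : Equiv.Perm P) x ∈ B1)).card
        = (k - 1) * (k - 1) + S.card := by
      rw [← Finset.sum_erase_add B1 _ hB1ω]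
      have hω : (S.filter (fun g => (g : Equiv.Perm P) ω ∈ B1)).card = S.card := by
        congr 1
        exact Finset.filter_true_of_mem (fun g hg => by rw [hfix g hg]; exact hB1ω)
      have hrest : ∀ x ∈ B1.erase ω,
          (S.filter (fun g => (g : Equiv.Perm P) x ∈ B1)).card = k - 1 := by
        intro x hx
        rw [inner_count ω S hfix hsharp x (Finset.ne_of_mem_erase hx) B1,
          Finset.card_erase_of_mem hB1ω, D.block_size B1 hB1m]
      rw [Finset.sum_congr rfl hrest, Finset.sum_const, smul_eq_mul, hω,
        Finset.card_erase_of_mem hB1ω, D.block_size B1 hB1m]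
    rw [hrhs] at h
    exact h
  -- arithmetic
  have hk1 : 1 ≤ k := by omega
  have hv1 : 1 ≤ v := by omega
  -- cast to ℤ
  have id' : (lam : ℤ) * ((v : ℤ) - 1) = (k : ℤ) * ((k : ℤ) - 1) := by
    have := hident
    zify [hk1, hv1] at this
    linarith
  have hs' : (S.card : ℤ) = (v : ℤ) - 1 := by
    rw [hcardS]; zify [hv1]
  have e1' : (n1 : ℤ) * k + (m1 : ℤ) * lam = (k : ℤ) * k := by exact_mod_cast e1
  have e2' : (n2 : ℤ) * k + (m2 : ℤ) * lam
      = ((k : ℤ) - 1) * ((k : ℤ) - 1) + ((v : ℤ) - 1) := by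
    have := e2
    zify [hk1] at this
    rw [hs'] at this
    linarith
  have hsum1' : (n1 : ℤ) + m1 = (v : ℤ) - 1 := by
    rw [← hs']; exact_mod_cast hsum1
  have hsum2' : (n2 : ℤ) + m2 = (v : ℤ) - 1 := by
    rw [← hs']; exact_mod_cast hsum2
  have hA' : (n1 : ℤ) * ((k : ℤ) - lam) = k := by
    linear_combination e1' - id' - (lam : ℤ) * hsum1'
  have hBmul : ((lam : ℤ) * n2) * ((k : ℤ) - lam) = ((k : ℤ) - 1) * ((k : ℤ) - lam) := by
    linear_combination (lam : ℤ) * e2' - (lam : ℤ) ^ 2 * hsum2' + (1 - (lam : ℤ)) * id'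
  have hklam : (k : ℤ) - lam ≠ 0 := by
    have : (lam : ℤ) < k := by exact_mod_cast h1
    omega
  have hB' : (lam : ℤ) * n2 = (k : ℤ) - 1 := mul_right_cancel₀ hklam hBmul
  -- back to ℕ
  have hA : n1 * (k - lam) = k := by
    have : (n1 : ℤ) * ((k - lam : ℕ) : ℤ) = (k : ℕ) := by
      rw [Nat.cast_sub h1.le]; exact hA'
    exact_mod_cast this
  have hBn : lam * n2 = k - 1 := by
    have : ((lam * n2 : ℕ) : ℤ) = ((k - 1 : ℕ) : ℤ) := by
      rw [Nat.cast_sub hk1]; push_cast; exact hB'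
    exact_mod_cast this
  -- final contradiction
  set d := k - lam with hd
  have hd1 : 1 ≤ d := by omega
  have hddvdk : d ∣ k := Dvd.intro_left n1 hA
  have hddvdlam : d ∣ lam := by
    have h' : d ∣ k - d := Nat.dvd_sub hddvdk dvd_rfl
    have hkd : k - d = lam := by omega
    rwa [hkd] at h' 
  have hdlelam : d ≤ lam := Nat.le_of_dvd hlam hddvdlam
  have hlamdvd : lam ∣ k - 1 := Dvd.intro n2 hBn
  by_cases hd1' : d = 1
  · -- k = lam + 1, then v - 1 = k, contradiction with h3
    have hk : k = lam + 1 := by omega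
    have : lam * (v - 1) = lam * (lam + 1) := by
      rw [hident, hk, Nat.add_sub_cancel]; ring
    have hveq : v - 1 = lam + 1 := Nat.eq_of_mul_eq_mul_left hlam this
    omega
  · -- d ≥ 2: lam ∣ d - 1 with 0 < d - 1 < lam, contradiction
    have hd2 : 2 ≤ d := by omega
    have hlamdvd' : lam ∣ d - 1 := by
      have h' : d - 1 = (k - 1) - lam := by omega
      rw [h']
      exact Nat.dvd_sub hlamdvd dvd_rfl
    have := Nat.le_of_dvd (by omega) hlamdvd'
    omega
end

section
/- If S is a set of permutations of an n-element set Ω such that any two distinct elements of S agree on at most t−1 points (equivalently have Hamming distance at least n−t+1), then |S| ≤ n(n−1)···(n−t+1), with equality if and only if S is sharply t-transitive. -/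
theorem stmt_12 {Ω : Type*} [Fintype Ω] [DecidableEq Ω] {n t : ℕ}
    (hcard : Fintype.card Ω = n) (ht : 1 ≤ t) (htn : t ≤ n)
    (S : Finset (Equiv.Perm Ω))
    (hdist : ∀ x ∈ S, ∀ y ∈ S, x ≠ y →
      (Finset.univ.filter (fun a : Ω => x a = y a)).card ≤ t - 1) :
    S.card ≤ n.descFactorial t ∧
    (S.card = n.descFactorial t ↔
      ∀ x y : Fin t → Ω, Function.Injective x → Function.Injective y →
        ∃! g : Equiv.Perm Ω, g ∈ S ∧ ∀ i, g (x i) = y i) := by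
  classical
  -- two elements of S agreeing on an injective t-tuple are equal
  have key : ∀ g ∈ S, ∀ h ∈ S, ∀ x : Fin t → Ω, Function.Injective x →
      (∀ i, g (x i) = h (x i)) → g = h := by
    intro g hg h hh x hx hagree
    by_contra hne
    have h1 := hdist g hg h hh hne
    have h2 : (Finset.univ.image x) ⊆ Finset.univ.filter (fun a => g a = h a) := by
      intro a ha
      simp only [Finset.mem_image, Finset.mem_univ, true_and] at ha
      obtain ⟨i, rfl⟩ := ha
      simp [hagree i]
    have h3 : (Finset.univ.image x).card = t := by
      rw [Finset.card_image_of_injective _ hx, Finset.card_univ, Fintype.card_fin]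
    have := Finset.card_le_card h2
    omega
  have hcardE : Fintype.card (Fin t ↪ Ω) = n.descFactorial t := by
    rw [Fintype.card_embedding_eq, Fintype.card_fin, hcard]
  have hφinj : ∀ f : Fin t ↪ Ω,
      Set.InjOn (fun g : Equiv.Perm Ω => f.trans g.toEmbedding) S := by
    intro f g hg h hh heq
    exact key g hg h hh f f.injective (fun i => DFunLike.congr_fun heq i)
  have hφimage : ∀ f : Fin t ↪ Ω,
      (S.image (fun g : Equiv.Perm Ω => f.trans g.toEmbedding)).card = S.card :=
    fun f => Finset.card_image_of_injOn (hφinj f)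
  obtain ⟨e⟩ : Nonempty (Fin t ↪ Ω) := by
    apply Function.Embedding.nonempty_of_card_le
    simp [hcard, htn]
  have hbound : S.card ≤ n.descFactorial t := by
    rw [← hcardE, ← Finset.card_univ, ← hφimage e]
    exact Finset.card_le_card (Finset.subset_univ _)
  refine ⟨hbound, ?_, ?_⟩
  · -- equality → sharply t-transitive
    intro hS x y hx hy
    have himg : S.image (fun g : Equiv.Perm Ω => (⟨x, hx⟩ : Fin t ↪ Ω).trans g.toEmbedding)
        = Finset.univ := by
      apply Finset.eq_univ_of_card
      rw [hφimage, hS, ← hcardE]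
    have hy' : (⟨y, hy⟩ : Fin t ↪ Ω) ∈ S.image
        (fun g : Equiv.Perm Ω => (⟨x, hx⟩ : Fin t ↪ Ω).trans g.toEmbedding) := by
      rw [himg]; exact Finset.mem_univ _
    obtain ⟨g, hgS, hg⟩ := Finset.mem_image.mp hy'
    refine ⟨g, ⟨hgS, fun i => DFunLike.congr_fun hg i⟩, ?_⟩
    rintro g' ⟨hg'S, hg'⟩
    exact key g' hg'S g hgS x hx (fun i => (hg' i).trans (DFunLike.congr_fun hg i).symm)
  · -- sharply t-transitive → equality
    intro hsharp
    have himg : S.image (fun g : Equiv.Perm Ω => e.trans g.toEmbedding) = Finset.univ := by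
      apply Finset.eq_univ_of_forall
      intro f
      obtain ⟨g, ⟨hgS, hg⟩, _⟩ := hsharp e f e.injective f.injective
      exact Finset.mem_image.mpr ⟨g, hgS, DFunLike.ext _ _ hg⟩
    rw [← hφimage e, himg, Finset.card_univ, hcardE]
end

section
/- Let G be a permutation group on a finite set Ω, p a prime, and suppose there exist B, C ⊆ Ω with p ∤ |B|·|C| and p | |B ∩ g(C)| for all g ∈ G. Then the matrix equation Σ_{g∈G} x_g π(g) = J has no solution with coefficients x_g in the finite field 𝔽_p (hence no integral solution). -/
theorem stmt_14 {Ω : Type*} [Fintype Ω] [DecidableEq Ω]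
    (G : Subgroup (Equiv.Perm Ω)) (p : ℕ) [Fact p.Prime]
    (B C : Finset Ω)
    (hBC : ¬ p ∣ B.card * C.card)
    (hdvd : ∀ g ∈ G, p ∣ (B ∩ C.image g).card) :
    ¬ ∃ x : Equiv.Perm Ω → ZMod p,
      (∀ g, g ∉ G → x g = 0) ∧
      (∑ g : Equiv.Perm Ω,
          x g • (Matrix.of fun i j : Ω => if g j = i then (1 : ZMod p) else 0))
        = Matrix.of fun _ _ : Ω => (1 : ZMod p) := by
  rintro ⟨x, hx0, hx⟩
  have key := congrArg (fun M : Matrix Ω Ω (ZMod p) => ∑ i ∈ B, ∑ j ∈ C, M i j) hx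
  simp only [Matrix.sum_apply, Matrix.smul_apply, Matrix.of_apply, smul_eq_mul] at key
  have hR : ∑ i ∈ B, ∑ j ∈ C, (1 : ZMod p) = ((B.card * C.card : ℕ) : ZMod p) := by
    simp [mul_comm]
  rw [hR] at key
  have hL : ∀ g : Equiv.Perm Ω,
      ∑ i ∈ B, ∑ j ∈ C, (if g j = i then (1 : ZMod p) else 0)
        = ((B ∩ C.image g).card : ZMod p) := by
    intro g
    rw [Finset.sum_comm]
    have : ∀ j ∈ C, (∑ i ∈ B, if g j = i then (1 : ZMod p) else 0)
        = if g j ∈ B then 1 else 0 := by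
      intro j _
      simp [Finset.sum_ite_eq, eq_comm]
    rw [Finset.sum_congr rfl this, Finset.sum_boole]
    have himg : (B ∩ C.image g) = (C.filter (fun j => g j ∈ B)).image g := by
      ext i
      simp only [Finset.mem_inter, Finset.mem_image, Finset.mem_filter]
      constructor
      · rintro ⟨hiB, j, hjC, rfl⟩
        exact ⟨j, ⟨hjC, hiB⟩, rfl⟩
      · rintro ⟨j, ⟨hjC, hjB⟩, rfl⟩
        exact ⟨hjB, j, hjC, rfl⟩
    rw [himg, Finset.card_image_of_injective _ g.injective]
  have hzero : ∑ g : Equiv.Perm Ω, ∑ i ∈ B, ∑ j ∈ C,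
      x g * (if g j = i then (1 : ZMod p) else 0) = 0 := by
    apply Finset.sum_eq_zero
    intro g _
    simp only [← Finset.mul_sum]
    rw [hL g]
    by_cases hg : g ∈ G
    · have := hdvd g hg
      rw [(ZMod.natCast_eq_zero_iff _ _).mpr this, mul_zero]
    · rw [hx0 g hg, zero_mul]
  have swap : (∑ i ∈ B, ∑ j ∈ C, ∑ g : Equiv.Perm Ω,
        x g * (if g j = i then (1 : ZMod p) else 0))
      = ∑ g : Equiv.Perm Ω, ∑ i ∈ B, ∑ j ∈ C,
        x g * (if g j = i then (1 : ZMod p) else 0) := by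
    rw [Finset.sum_congr rfl (fun i _ => Finset.sum_comm)]
    exact Finset.sum_comm
  rw [swap, hzero] at key
  exact hBC ((ZMod.natCast_eq_zero_iff _ _).mp key.symm)
end

section
/- For n ≡ 2, 3 (mod 4), there is no S ⊆ A_n such that for all a, b in the set of ordered pairs of distinct elements of Fin n, exactly one g ∈ S maps a to b under the diagonal action; that is, A_n has no sharply 2-transitive subset. -/
open Finset Equiv Equiv.Perm

lemma sign_eq_signAux' {n : ℕ} (g : Equiv.Perm (Fin n)) :
    Equiv.Perm.sign g = Equiv.Perm.signAux g := by
  refine Equiv.Perm.swap_induction_on g (by simp) ?_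
  intro f x y hxy ih
  rw [map_mul, signAux_mul, sign_swap hxy, signAux_swap hxy, ih]

theorem stmt_17 {n : ℕ} (hn : n % 4 = 2 ∨ n % 4 = 3) :
    ¬ ∃ S : Finset (Equiv.Perm (Fin n)),
      (∀ g ∈ S, Equiv.Perm.sign g = 1) ∧
      ∀ a b : {p : Fin n × Fin n // p.1 ≠ p.2},
        ∃! g : Equiv.Perm (Fin n),
          g ∈ S ∧ g a.1.1 = b.1.1 ∧ g a.1.2 = b.1.2 := by
  rintro ⟨S, hS1, hS2⟩
  classical
  set Xf : Finset (Fin n × Fin n) := univ.filter (fun p => p.1 ≠ p.2) with hXf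
  set L : Finset (Fin n × Fin n) := univ.filter (fun p => p.1 < p.2) with hL
  set G : Finset (Fin n × Fin n) := univ.filter (fun p => p.2 < p.1) with hG
  -- cardinality facts
  have hdiag : (univ.filter (fun p : Fin n × Fin n => p.1 = p.2)).card = n := by
    have e : (univ : Finset (Fin n)).card
        = (univ.filter (fun p : Fin n × Fin n => p.1 = p.2)).card := by
      refine Finset.card_nbij (fun a => (a, a)) (fun a _ => by simp) ?_ ?_
      · intro a _ b _ h; exact congrArg Prod.fst h
      · intro p hp
        simp only [Finset.coe_filter, Set.mem_setOf_eq, mem_univ, true_and] at hp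
        exact ⟨p.1, by simp, Prod.ext rfl hp⟩
    rw [← e, Finset.card_fin]
  have hXcard : (univ.filter (fun p : Fin n × Fin n => p.1 = p.2)).card + Xf.card = n * n := by
    rw [hXf]
    have := Finset.card_filter_add_card_filter_not
      (s := (univ : Finset (Fin n × Fin n))) (p := fun p => p.1 = p.2)
    simpa [Fintype.card_fin] using this
  have hLG : L.card = G.card := by
    apply Finset.card_bij (fun p _ => (p.2, p.1))
    · intro p hp; simp only [hL, hG, mem_filter] at *; exact ⟨mem_univ _, hp.2⟩
    · intro p _ q _ h
      simp only [Prod.mk.injEq] at h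
      exact Prod.ext h.2 h.1
    · intro p hp; simp only [hG, mem_filter] at hp
      exact ⟨(p.2, p.1), by simp [hL, hp.2], rfl⟩
  have hsplit : L.card + G.card = Xf.card := by
    have h1 : Xf.filter (fun p => p.1 < p.2) = L := by
      ext p
      simp only [hXf, hL, mem_filter, mem_univ, true_and, and_iff_right_iff_imp]
      exact fun h => h.ne
    have h2 : Xf.filter (fun p => ¬ p.1 < p.2) = G := by
      ext p
      simp only [hXf, hG, mem_filter, mem_univ, true_and]
      constructor
      · rintro ⟨hne, hnlt⟩; exact lt_of_le_of_ne (not_lt.1 hnlt) (Ne.symm hne)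
      · intro h; exact ⟨(ne_of_lt h).symm, not_lt.2 h.le⟩
    rw [← h1, ← h2]
    exact Finset.card_filter_add_card_filter_not _
  have hfin : (finPairsLT n).card = G.card := by
    apply Finset.card_bij (fun a _ => ((a.1 : Fin n), a.2))
    · intro a ha; simp only [hG, mem_filter]
      exact ⟨mem_univ _, mem_finPairsLT.1 ha⟩
    · intro a _ b _ h
      simp only [Prod.mk.injEq] at h
      exact Sigma.ext h.1 (heq_of_eq h.2)
    · intro p hp; simp only [hG, mem_filter] at hp
      exact ⟨⟨p.1, p.2⟩, mem_finPairsLT.2 hp.2, rfl⟩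
  have hmodsq : n * n % 4 = (n % 4) * (n % 4) % 4 := Nat.mul_mod n n 4
  have hX2 : n + Xf.card = n * n := by omega
  have hLodd : Odd L.card := by
    rw [Nat.odd_iff]
    rcases hn with h | h <;> rw [h] at hmodsq <;> omega
  -- the double product
  have key1 : ∀ g ∈ S, (∏ a ∈ finPairsLT n, if g a.1 ≤ g a.2 then (-1 : ℤˣ) else 1) = 1 := by
    intro g hg
    have : Equiv.Perm.signAux g = 1 := by rw [← sign_eq_signAux', hS1 g hg]
    simpa [Equiv.Perm.signAux] using this
  have key2 : ∀ a ∈ finPairsLT n,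
      (∏ g ∈ S, if g a.1 ≤ g a.2 then (-1 : ℤˣ) else 1) = (-1 : ℤˣ) ^ L.card := by
    intro a ha
    have hane : (a.1 : Fin n) ≠ a.2 := (ne_of_lt (mem_finPairsLT.1 ha)).symm
    have hbij : (∏ g ∈ S, if g a.1 ≤ g a.2 then (-1 : ℤˣ) else 1)
        = ∏ p ∈ Xf, if p.1 ≤ p.2 then (-1 : ℤˣ) else 1 := by
      apply Finset.prod_bij (fun g _ => ((g a.1 : Fin n), g a.2))
      · intro g hg
        simp only [hXf, mem_filter]
        exact ⟨mem_univ _, fun h => hane (g.injective h)⟩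
      · intro g hg g' hg' h
        simp only [Prod.mk.injEq] at h
        obtain ⟨u, _, huniq⟩ :=
          hS2 ⟨(a.1, a.2), hane⟩ ⟨(g a.1, g a.2), fun hc => hane (g.injective hc)⟩
        have e1 : g = u := huniq g ⟨hg, rfl, rfl⟩
        have e2 : g' = u := huniq g' ⟨hg', h.1.symm, h.2.symm⟩
        rw [e1, e2]
      · intro p hp
        simp only [hXf, mem_filter] at hp
        obtain ⟨u, ⟨huS, hu1, hu2⟩, _⟩ := hS2 ⟨(a.1, a.2), hane⟩ ⟨p, hp.2⟩
        exact ⟨u, huS, by simp [hu1, hu2]⟩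
      · intro g hg; rfl
    have hfe : Xf.filter (fun p => p.1 ≤ p.2) = L := by
      rw [hXf, Finset.filter_filter, hL]
      ext p
      simp only [mem_filter, mem_univ, true_and]
      constructor
      · rintro ⟨hne, hle⟩; exact lt_of_le_of_ne hle hne
      · intro h; exact ⟨h.ne, h.le⟩
    rw [hbij, Finset.prod_ite, Finset.prod_const, Finset.prod_const, one_pow, mul_one, hfe]
  have lhs1 : (∏ g ∈ S, ∏ a ∈ finPairsLT n, if g a.1 ≤ g a.2 then (-1 : ℤˣ) else 1) = 1 :=
    Finset.prod_eq_one key1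
  have lhs2 : (∏ g ∈ S, ∏ a ∈ finPairsLT n, if g a.1 ≤ g a.2 then (-1 : ℤˣ) else 1)
      = (-1 : ℤˣ) ^ (L.card * L.card) := by
    rw [Finset.prod_comm, Finset.prod_congr rfl key2, Finset.prod_const, ← pow_mul,
      hfin, ← hLG, Nat.mul_comm]
  rw [lhs1] at lhs2
  have : ((-1 : ℤˣ) ^ (L.card * L.card)) = -1 := Odd.neg_one_pow (hLodd.mul hLodd)
  rw [this] at lhs2
  exact absurd lhs2 (by decide)
end
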